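/- arXiv:2604.23292 — 2 statements merged into one kernel-verified Lean document; each statement's English description precedes it below -/
import Mathlib

section
/- Let ρ ∈ M_n(ℂ) be positive semidefinite, let 𝒜 be a real *-subalgebra of M_n(ℂ), let Π be the orthogonal projection of M_n(ℂ) onto 𝒜 with respect to the real Hilbert–Schmidt inner product, and set ρ₀ := Π(ρ). Then the support of ρ is contained in the support of ρ₀: for every v ∈ ℂⁿ, ρ₀ v = 0 implies ρ v = 0. If, moreover, the orthogonal projection matrix s onto the column space (range) of ρ belongs to 𝒜, then the supports coincide: ρ v = 0 if and only if ρ₀ v = 0. -/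
open Matrix Complex Filter
open scoped ComplexOrder

/-- `Mat n` is the algebra of `n × n` complex matrices. -/
abbrev Mat (n : ℕ) := Matrix (Fin n) (Fin n) ℂ

/-- A real `*`-subalgebra of `M_n(ℂ)`: a real-linear subspace containing the identity,
closed under matrix multiplication and conjugate transpose. -/
def IsRealStarSubalgebra {n : ℕ} (𝒜 : Set (Mat n)) : Prop :=
  (∀ A ∈ 𝒜, ∀ B ∈ 𝒜, A + B ∈ 𝒜) ∧
  (∀ (r : ℝ), ∀ A ∈ 𝒜, r • A ∈ 𝒜) ∧
  (∀ A ∈ 𝒜, ∀ B ∈ 𝒜, A * B ∈ 𝒜) ∧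
  (∀ A ∈ 𝒜, Aᴴ ∈ 𝒜) ∧
  (1 : Mat n) ∈ 𝒜

/-- A real positive map: a real-linear map sending positive semidefinite matrices
to positive semidefinite matrices. -/
def IsRealPositiveMap {n : ℕ} (α : Mat n →ₗ[ℝ] Mat n) : Prop :=
  ∀ B : Mat n, B.PosSemidef → (α B).PosSemidef

/-- A real conditional expectation onto `𝒜`: a real positive map with range in `𝒜`
satisfying the module property `α(AB) = A·α(B)` for `A ∈ 𝒜`. -/
def IsRealCondExp {n : ℕ} (𝒜 : Set (Mat n)) (α : Mat n →ₗ[ℝ] Mat n) : Prop :=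
  IsRealPositiveMap α ∧ (∀ B : Mat n, α B ∈ 𝒜) ∧
  (∀ A ∈ 𝒜, ∀ B : Mat n, α (A * B) = A * α B)


/-!
Uniqueness of the Hilbert–Schmidt orthogonal projection `P` onto a real `*`-subalgebra `𝒜` shows
that `P` preserves Hermitian matrices and that `P (A B C) = A (P B) C` for `A, C ∈ 𝒜`.

The projection `p` onto `ker ρ₀` is a continuous function of the Hermitian matrix `ρ₀ ∈ 𝒜`, hence
lies in `𝒜`. Since `ρ - ρ₀` is orthogonal to `p` and `p ρ₀ = 0`, the positive matrix `p ρ p` has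
trace zero, so it vanishes and `ρ` annihilates `ker ρ₀`. Conversely, if the support projection `s`
of `ρ` lies in `𝒜`, then `ρ = s ρ s` gives `ρ₀ = s ρ₀ s`, which annihilates `ker s = ker ρ`.
-/

namespace Matrix

variable {ι : Type*} [Fintype ι]

lemma PosSemidef.eq_zero_of_re_trace_eq_zero {T : Matrix ι ι ℂ} (hT : T.PosSemidef)
    (h : T.trace.re = 0) : T = 0 :=
  hT.trace_eq_zero_iff.mp <| Complex.ext h (Complex.nonneg_iff.mp hT.trace_nonneg).2.symm

lemma eq_zero_of_re_trace_conjTranspose_mul_self_eq_zero {C : Matrix ι ι ℂ}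
    (h : (Cᴴ * C).trace.re = 0) : C = 0 :=
  trace_conjTranspose_mul_self_eq_zero_iff.mp
    ((posSemidef_conjTranspose_mul_self C).eq_zero_of_re_trace_eq_zero h ▸ trace_zero ..)

lemma re_trace_conjTranspose (A : Matrix ι ι ℂ) : Aᴴ.trace.re = A.trace.re := by
  rw [trace_conjTranspose, Complex.star_def, Complex.conj_re]

lemma mul_eq_self_of_ker_le {ρ s : Matrix ι ι ℂ} (hs : s * s = s)
    (hker : ∀ v, s *ᵥ v = 0 → ρ *ᵥ v = 0) : ρ * s = ρ := by
  classical
  refine (sub_eq_zero.mp ?_).symm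
  rw [← mul_one ρ, mul_assoc, one_mul, ← mul_sub, ext_iff_mulVec]
  intro v
  rw [← mulVec_mulVec, zero_mulVec]
  exact hker _ (by rw [mulVec_mulVec, mul_sub, mul_one, hs, sub_self, zero_mulVec])

lemma exists_kernel_projection_mem [DecidableEq ι] {S : StarSubalgebra ℝ (Matrix ι ι ℂ)}
    {A : Matrix ι ι ℂ} (hA : A.IsHermitian) (hAS : A ∈ S) :
    ∃ p ∈ S, p.IsHermitian ∧ p * p = p ∧ p * A = 0 ∧ ∀ v, A *ᵥ v = 0 → p *ᵥ v = v := by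
  have hA' : IsSelfAdjoint A := hA
  have hcont (f : ℝ → ℝ) : ContinuousOn f (spectrum ℝ A) := A.finite_real_spectrum.continuousOn f
  have hS : IsClosed (S : Set (Matrix ι ι ℂ)) := S.toSubmodule.closed_of_finiteDimensional
  -- `1 - x⁻¹ * x` is the indicator function of `{0}`, since `0⁻¹ = 0`.
  refine ⟨cfc (fun x : ℝ ↦ 1 - x⁻¹ * x) A, cfc_mem _ hAS, cfc_predicate _ _, ?_, ?_, ?_⟩
  · rw [← cfc_mul _ _ A (hcont _) (hcont _)]
    refine cfc_congr fun x _ ↦ ?_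
    rcases eq_or_ne x 0 with rfl | hx <;> simp [*]
  · conv_lhs => enter [2]; rw [← cfc_id' ℝ A]
    rw [← cfc_mul _ _ A (hcont _) (hcont _), ← cfc_zero ℝ A]
    refine cfc_congr fun x _ ↦ ?_
    rcases eq_or_ne x 0 with rfl | hx <;> simp [*]
  · intro v hv
    rw [cfc_sub _ _ A (hcont _) (hcont _), cfc_const_one ℝ A, cfc_mul _ _ A (hcont _) (hcont _),
      cfc_id' ℝ A, sub_mulVec, ← mulVec_mulVec, hv, mulVec_zero, one_mulVec, sub_zero]

end Matrix

structure IsHSOrthogonalProjection {ι : Type*} [Fintype ι] (S : Set (Matrix ι ι ℂ))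
    (P : Matrix ι ι ℂ → Matrix ι ι ℂ) : Prop where
  mem : ∀ B, P B ∈ S
  orthogonal : ∀ A ∈ S, ∀ B, (Aᴴ * (B - P B)).trace.re = 0

namespace IsHSOrthogonalProjection

variable {ι : Type*} [Fintype ι] [DecidableEq ι] {S : StarSubalgebra ℝ (Matrix ι ι ℂ)}
  {P : Matrix ι ι ℂ → Matrix ι ι ℂ}

lemma eq_of_mem (hP : IsHSOrthogonalProjection S P) {B X : Matrix ι ι ℂ} (hX : X ∈ S)
    (horth : ∀ A ∈ S, (Aᴴ * (B - X)).trace.re = 0) : P B = X := by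
  have hC : X - P B ∈ S := sub_mem hX (hP.mem B)
  have hCC : (X - P B)ᴴ * (X - P B) = (X - P B)ᴴ * (B - P B) - (X - P B)ᴴ * (B - X) := by
    rw [← mul_sub, sub_sub_sub_cancel_left]
  refine (sub_eq_zero.mp (eq_zero_of_re_trace_conjTranspose_mul_self_eq_zero ?_)).symm
  rw [hCC, trace_sub, Complex.sub_re, hP.orthogonal _ hC, horth _ hC, sub_zero]

lemma isHermitian (hP : IsHSOrthogonalProjection S P) {B : Matrix ι ι ℂ} (hB : B.IsHermitian) :
    (P B).IsHermitian := by
  refine (hP.eq_of_mem (star_mem (hP.mem B)) fun A hA ↦ ?_).symm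
  have hsub : B - star (P B) = (B - P B)ᴴ := by
    rw [conjTranspose_sub, hB.eq, star_eq_conjTranspose]
  rw [hsub, ← conjTranspose_mul, re_trace_conjTranspose, trace_mul_comm,
    ← conjTranspose_conjTranspose A]
  exact hP.orthogonal _ (star_mem hA) B

lemma mul_mul (hP : IsHSOrthogonalProjection S P) {A C : Matrix ι ι ℂ} (hA : A ∈ S) (hC : C ∈ S)
    (B : Matrix ι ι ℂ) : P (A * B * C) = A * P B * C := by
  refine hP.eq_of_mem (mul_mem (mul_mem hA (hP.mem B)) hC) fun D hD ↦ ?_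
  have hfactor : Dᴴ * (A * B * C - A * P B * C) = Dᴴ * A * (B - P B) * C := by noncomm_ring
  have hadjoint : C * (Dᴴ * A) = (Aᴴ * D * Cᴴ)ᴴ := by
    simp only [conjTranspose_mul, conjTranspose_conjTranspose, mul_assoc]
  rw [hfactor, trace_mul_cycle, hadjoint]
  exact hP.orthogonal _ (mul_mem (mul_mem (star_mem hA) hD) (star_mem hC)) B

lemma mulVec_eq_zero_of_mulVec_eq_zero (hP : IsHSOrthogonalProjection S P) {ρ : Matrix ι ι ℂ}
    (hρ : ρ.PosSemidef) {v : ι → ℂ} (hv : P ρ *ᵥ v = 0) : ρ *ᵥ v = 0 := by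
  obtain ⟨p, hpS, hp, hpp, hpρ₀, hpv⟩ :=
    exists_kernel_projection_mem (hP.isHermitian hρ.isHermitian) (hP.mem ρ)
  have htrace : (p * ρ).trace.re = 0 := by
    simpa [hp.eq, mul_sub, hpρ₀] using hP.orthogonal p hpS ρ
  have hsandwich : pᴴ * ρ * p = 0 := by
    refine (hρ.conjTranspose_mul_mul_same p).eq_zero_of_re_trace_eq_zero ?_
    rwa [hp.eq, trace_mul_cycle, hpp]
  rw [← hpv v hv, ← hρ.dotProduct_mulVec_zero_iff]
  calc star (p *ᵥ v) ⬝ᵥ ρ *ᵥ (p *ᵥ v) = star v ⬝ᵥ (pᴴ * ρ * p) *ᵥ v := by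
        rw [star_mulVec, ← dotProduct_mulVec, mulVec_mulVec, mulVec_mulVec, mul_assoc]
    _ = 0 := by rw [hsandwich, zero_mulVec, dotProduct_zero]

lemma mulVec_eq_zero_iff_of_mem (hP : IsHSOrthogonalProjection S P) {ρ s : Matrix ι ι ℂ}
    (hρ : ρ.PosSemidef) (hs : s.IsHermitian) (hss : s * s = s)
    (hker : ∀ v, s *ᵥ v = 0 ↔ ρ *ᵥ v = 0) (hsS : s ∈ S) (v : ι → ℂ) :
    ρ *ᵥ v = 0 ↔ P ρ *ᵥ v = 0 := by
  refine ⟨fun hv ↦ ?_, hP.mulVec_eq_zero_of_mulVec_eq_zero hρ⟩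
  have hρs : ρ * s = ρ := mul_eq_self_of_ker_le hss fun v ↦ (hker v).mp
  have hsρ : s * ρ = ρ := by
    simpa only [conjTranspose_mul, hs.eq, hρ.isHermitian.eq] using congrArg conjTranspose hρs
  have hsandwich : P ρ = s * P ρ * s := by rw [← hP.mul_mul hsS hsS, hsρ, hρs]
  rw [hsandwich, ← mulVec_mulVec, (hker v).mpr hv, mulVec_zero]

end IsHSOrthogonalProjection

def IsRealStarSubalgebra.toStarSubalgebra {n : ℕ} {𝒜 : Set (Mat n)} (h : IsRealStarSubalgebra 𝒜) :
    StarSubalgebra ℝ (Mat n) where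
  carrier := 𝒜
  add_mem' ha hb := h.1 _ ha _ hb
  zero_mem' := by simpa using h.2.1 0 1 h.2.2.2.2
  mul_mem' ha hb := h.2.2.1 _ ha _ hb
  one_mem' := h.2.2.2.2
  algebraMap_mem' r := by simpa [Algebra.algebraMap_eq_smul_one] using h.2.1 r 1 h.2.2.2.2
  star_mem' ha := h.2.2.2.1 _ ha

/-- Let `ρ` be positive semidefinite, `P` the orthogonal projection onto a
real `*`-subalgebra `𝒜` (w.r.t. the real Hilbert–Schmidt inner product) and `ρ₀ = P ρ`.
Then `supp ρ ≤ supp ρ₀` (i.e. `ker ρ₀ ⊆ ker ρ`); and if the orthogonal projection matrix `s`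
onto the range of `ρ` (the Hermitian idempotent with the same kernel as `ρ`) lies in `𝒜`,
then the supports coincide (`ker ρ = ker ρ₀`). -/
theorem stmt4 {n : ℕ} (ρ : Mat n) (hρ : ρ.PosSemidef)
    (𝒜 : Set (Mat n)) (h𝒜 : IsRealStarSubalgebra 𝒜)
    (P : Mat n →ₗ[ℝ] Mat n)
    (hPmem : ∀ B : Mat n, P B ∈ 𝒜)
    (hPorth : ∀ A ∈ 𝒜, ∀ B : Mat n, ((Aᴴ * (B - P B)).trace).re = 0) :
    (∀ v : Fin n → ℂ, (P ρ).mulVec v = 0 → ρ.mulVec v = 0) ∧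
    (∀ s : Mat n, s.IsHermitian → s * s = s →
      (∀ v : Fin n → ℂ, s.mulVec v = 0 ↔ ρ.mulVec v = 0) → s ∈ 𝒜 →
      ∀ v : Fin n → ℂ, ρ.mulVec v = 0 ↔ (P ρ).mulVec v = 0) := by
  have hP : IsHSOrthogonalProjection (h𝒜.toStarSubalgebra : Set (Mat n)) P := ⟨hPmem, hPorth⟩
  exact ⟨fun v ↦ hP.mulVec_eq_zero_of_mulVec_eq_zero hρ,
    fun s hs hss hker hs𝒜 ↦ hP.mulVec_eq_zero_iff_of_mem hρ hs hss hker hs𝒜⟩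
end

section
/- Let 𝒜_J be a real Jordan algebra of Hermitian n×n complex matrices, and let Π_J be the orthogonal projection of the real vector space of Hermitian n×n complex matrices onto 𝒜_J with respect to the inner product ⟨A,B⟩ := Re Tr(A B). Then: (i) Π_J is positive: if B is positive semidefinite then Π_J(B) is positive semidefinite; and (ii) Π_J is faithful: if B is positive semidefinite and Π_J(B) = 0, then B = 0. -/
open Matrix Complex Filter
open scoped ComplexOrder

/-- A real Jordan algebra of Hermitian matrices: a real-linear subspace of the Hermitian
matrices containing the identity and closed under the Jordan product
`A∘B = (AB + BA)/2`. -/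
def IsRealJordanAlgebra {n : ℕ} (𝒜 : Set (Mat n)) : Prop :=
  (∀ A ∈ 𝒜, A.IsHermitian) ∧
  (∀ A ∈ 𝒜, ∀ B ∈ 𝒜, A + B ∈ 𝒜) ∧
  (∀ (r : ℝ), ∀ A ∈ 𝒜, r • A ∈ 𝒜) ∧
  (∀ A ∈ 𝒜, ∀ B ∈ 𝒜, (2⁻¹ : ℂ) • (A * B + B * A) ∈ 𝒜) ∧
  (1 : Mat n) ∈ 𝒜

/-!
Let `A = Π_J(B)` with `B ≥ 0`. The negative part `A⁻` is a polynomial in `A` (interpolate `x ↦ x⁻`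
on the finite spectrum), and a Jordan algebra contains all powers of its elements, so `A⁻ ∈ 𝒜_J`.
Orthogonality of `B - A` to `A⁻` then gives `0 ≤ Tr(A⁻ B) = Tr(A⁻ A) = -Tr((A⁻)²) ≤ 0`, hence
`A⁻ = 0`. Faithfulness is orthogonality of `B - Π_J(B)` to the identity: `Tr B = Tr Π_J(B)`.
-/

open Polynomial
open scoped MatrixOrder

namespace IsRealJordanAlgebra

variable {n : ℕ} {𝒜 : Set (Mat n)}

lemma zero_mem (h𝒜 : IsRealJordanAlgebra 𝒜) : (0 : Mat n) ∈ 𝒜 := by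
  simpa using h𝒜.2.2.1 0 1 h𝒜.2.2.2.2

lemma pow_mem (h𝒜 : IsRealJordanAlgebra 𝒜) {A : Mat n} (hA : A ∈ 𝒜) (k : ℕ) : A ^ k ∈ 𝒜 := by
  induction k with
  | zero => simpa using h𝒜.2.2.2.2
  | succ k ih =>
    have jordan_eq : (2⁻¹ : ℂ) • (A * A ^ k + A ^ k * A) = A ^ (k + 1) := by
      rw [← pow_succ', ← pow_succ, ← two_smul ℂ, smul_smul]
      norm_num
    simpa [jordan_eq] using h𝒜.2.2.2.1 A hA (A ^ k) ih

lemma aeval_mem (h𝒜 : IsRealJordanAlgebra 𝒜) {A : Mat n} (hA : A ∈ 𝒜) (p : ℝ[X]) :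
    aeval A p ∈ 𝒜 := by
  rw [aeval_eq_sum_range]
  refine Finset.sum_induction _ (· ∈ 𝒜) (fun a b ha hb ↦ h𝒜.2.1 a ha b hb) h𝒜.zero_mem ?_
  exact fun i _ ↦ h𝒜.2.2.1 _ _ (h𝒜.pow_mem hA i)

lemma cfc_mem (h𝒜 : IsRealJordanAlgebra 𝒜) {A : Mat n} (hA : A ∈ 𝒜) (f : ℝ → ℝ) :
    cfc f A ∈ 𝒜 := by
  let s := (spectrum ℝ A).toFinite.toFinset
  have hcfc : cfc f A = cfc (fun x ↦ (Lagrange.interpolate s id f).eval x) A :=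
    cfc_congr fun x hx ↦ (Lagrange.eval_interpolate_at_node f (Set.injOn_id _)
      (Set.Finite.mem_toFinset _ |>.mpr hx)).symm
  rw [hcfc, cfc_polynomial _ _ (h𝒜.1 A hA).isSelfAdjoint]
  exact h𝒜.aeval_mem hA _

lemma negPart_mem (h𝒜 : IsRealJordanAlgebra 𝒜) {A : Mat n} (hA : A ∈ 𝒜) : A⁻ ∈ 𝒜 := by
  rw [CFC.negPart_def, cfcₙ_eq_cfc]
  exact h𝒜.cfc_mem hA _

end IsRealJordanAlgebra

namespace Matrix

variable {ι : Type*} [Fintype ι]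

lemma PosSemidef.trace_mul_nonneg [DecidableEq ι] {𝕜 : Type*} [RCLike 𝕜] {E B : Matrix ι ι 𝕜}
    (hE : E.PosSemidef) (hB : B.PosSemidef) : 0 ≤ (E * B).trace := by
  obtain ⟨C, rfl⟩ := CStarAlgebra.nonneg_iff_eq_star_mul_self.mp hE.nonneg
  rw [star_eq_conjTranspose, mul_assoc, trace_mul_comm]
  exact (hB.mul_mul_conjTranspose_same C).trace_nonneg

lemma PosSemidef.eq_zero_of_re_trace_eq_zero_s8 {B : Matrix ι ι ℂ} (hB : B.PosSemidef)
    (h : B.trace.re = 0) : B = 0 :=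
  hB.trace_eq_zero_iff.mp <| Complex.ext h (Complex.nonneg_iff.mp hB.trace_nonneg).2.symm

lemma IsHermitian.posSemidef_of_re_trace_negPart_mul_sub [DecidableEq ι] {A B : Matrix ι ι ℂ}
    (hA : A.IsHermitian) (hB : B.PosSemidef) (horth : (A⁻ * (B - A)).trace.re = 0) :
    A.PosSemidef := by
  have hneg : (A⁻).PosSemidef := (CFC.negPart_nonneg A).posSemidef
  have hnegA : A⁻ * A = -((A⁻)ᴴ * A⁻) := by
    nth_rw 2 [← CFC.posPart_sub_negPart A hA.isSelfAdjoint]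
    rw [mul_sub, CFC.negPart_mul_posPart, zero_sub, hneg.isHermitian.eq]
  have hsq : ((A⁻)ᴴ * A⁻).trace.re = 0 := by
    have hBnn := (Complex.nonneg_iff.mp (hneg.trace_mul_nonneg hB)).1
    have hsqnn := (Complex.nonneg_iff.mp (posSemidef_conjTranspose_mul_self A⁻).trace_nonneg).1
    rw [mul_sub, trace_sub, Complex.sub_re, hnegA, trace_neg, Complex.neg_re] at horth
    linarith
  have hzero : A⁻ = 0 :=
    conjTranspose_mul_self_eq_zero.mp <|
      (posSemidef_conjTranspose_mul_self A⁻).eq_zero_of_re_trace_eq_zero_s8 hsq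
  exact ((CFC.negPart_eq_zero_iff A hA.isSelfAdjoint).mp hzero).posSemidef

end Matrix

/-- The orthogonal projection of the real space of Hermitian matrices onto a
real Jordan algebra `𝒜_J`, with respect to the inner product `⟨A,B⟩ = Re Tr(AB)`, is
positive and faithful. -/
theorem stmt8 {n : ℕ} (𝒜J : Set (Mat n)) (hJ : IsRealJordanAlgebra 𝒜J)
    (P : Mat n →ₗ[ℝ] Mat n)
    (hPmem : ∀ B : Mat n, B.IsHermitian → P B ∈ 𝒜J)
    (hPorth : ∀ A ∈ 𝒜J, ∀ B : Mat n, B.IsHermitian → ((A * (B - P B)).trace).re = 0) :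
    (∀ B : Mat n, B.PosSemidef → (P B).PosSemidef) ∧
    (∀ B : Mat n, B.PosSemidef → P B = 0 → B = 0) := by
  constructor
  · intro B hB
    have hPB : P B ∈ 𝒜J := hPmem B hB.isHermitian
    exact (hJ.1 _ hPB).posSemidef_of_re_trace_negPart_mul_sub hB
      (hPorth _ (hJ.negPart_mem hPB) B hB.isHermitian)
  · intro B hB hPB
    have htrace := hPorth 1 hJ.2.2.2.2 B hB.isHermitian
    rw [hPB, sub_zero, one_mul] at htrace
    exact hB.eq_zero_of_re_trace_eq_zero_s8 htrace
end
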